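/- If a family 𝓕 of theories is representable by a default theory and 𝓕 has a strong system of distinct representatives, then every subfamily 𝓖 ⊆ 𝓕 is representable by a default theory. -/
import Mathlib


/-- Propositional formulas over a set of atoms `α`. -/
inductive PropForm (α : Type) : Type
  | atom : α → PropForm α
  | fls  : PropForm α
  | impl : PropForm α → PropForm α → PropForm α

namespace PropForm

/-- Negation `¬φ`, definable as `φ → ⊥`. -/
def neg {α : Type} (φ : PropForm α) : PropForm α := impl φ fls

/-- Conjunction, definable from implication and falsum. -/
def conj {α : Type} (φ ψ : PropForm α) : PropForm α := (φ.impl ψ.neg).neg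

/-- Biimplication `φ ↔ ψ`. -/
def biimp {α : Type} (φ ψ : PropForm α) : PropForm α := conj (φ.impl ψ) (ψ.impl φ)

/-- Evaluation of a formula under a valuation of the atoms. -/
def eval {α : Type} (v : α → Prop) : PropForm α → Prop
  | atom a   => v a
  | fls      => False
  | impl φ ψ => eval v φ → eval v ψ

/-- Renaming/embedding of atoms. -/
def map {α β : Type} (f : α → β) : PropForm α → PropForm β
  | atom a   => atom (f a)
  | fls      => fls
  | impl φ ψ => impl (map f φ) (map f ψ)

end PropForm

/-- Classical propositional consequence operator. -/
def Cn {α : Type} (S : Set (PropForm α)) : Set (PropForm α) :=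
  {φ | ∀ v : α → Prop, (∀ ψ ∈ S, ψ.eval v) → φ.eval v}

/-- A theory: a set of formulas closed under propositional consequence. -/
def IsTheory {α : Type} (S : Set (PropForm α)) : Prop := Cn S ⊆ S

/-- A set of formulas is consistent if its consequences are not the whole language. -/
def Consistent {α : Type} (S : Set (PropForm α)) : Prop := Cn S ≠ Set.univ

/-- A default `α : Γ / β` with prerequisite, finite set of justifications, consequent. -/
structure Default (α : Type) where
  pre : PropForm α
  jus : Finset (PropForm α)
  con : PropForm α

/-- A default is applicable w.r.t. `S` if no justification's negation follows from `S`. -/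
def Default.Applicable {α : Type} (S : Set (PropForm α)) (d : Default α) : Prop :=
  ∀ γ ∈ d.jus, γ.neg ∉ Cn S

/-- The reduct of `D` w.r.t. `S`: the monotone rules `pre/con` of `S`-applicable defaults. -/
def Reduct {α : Type} (D : Set (Default α)) (S : Set (PropForm α)) :
    Set (PropForm α × PropForm α) :=
  {r | ∃ d ∈ D, d.Applicable S ∧ r = (d.pre, d.con)}

/-- `Cn^B(W)`: consequences of `W` in propositional calculus augmented with rules `B`;
the least set containing `W`, closed under `Cn`, and closed under the rules of `B`. -/
def CnRules {α : Type} (B : Set (PropForm α × PropForm α)) (W : Set (PropForm α)) :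
    Set (PropForm α) :=
  ⋂₀ {S | W ⊆ S ∧ Cn S ⊆ S ∧ ∀ r ∈ B, r.1 ∈ S → r.2 ∈ S}

/-- `S` is an extension of the default theory `(D, W)`. -/
def IsExtension {α : Type} (D : Set (Default α)) (W S : Set (PropForm α)) : Prop :=
  S = CnRules (Reduct D S) W

/-- The family of all extensions of `(D, W)`. -/
def ext {α : Type} (D : Set (Default α)) (W : Set (PropForm α)) : Set (Set (PropForm α)) :=
  {S | IsExtension D W S}

/-- A default is prerequisite-free if its prerequisite is a tautology. -/
def Default.PrereqFree {α : Type} (d : Default α) : Prop :=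
  d.pre ∈ Cn (∅ : Set (PropForm α))

/-- A default is normal if it has the form `α : {β} / β`. -/
def Default.Normal {α : Type} (d : Default α) : Prop := d.jus = {d.con}

section Aux

variable {α : Type}

lemma Cn_mono {S T : Set (PropForm α)} (h : S ⊆ T) : Cn S ⊆ Cn T :=
  fun _ hφ v hv => hφ v (fun ψ hψ => hv ψ (h hψ))

lemma subset_Cn (S : Set (PropForm α)) : S ⊆ Cn S := fun φ hφ _ hv => hv φ hφ

lemma Cn_idem (S : Set (PropForm α)) : Cn (Cn S) ⊆ Cn S :=
  fun _ hφ v hv => hφ v (fun ψ hψ => hψ v hv)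

/-- A tautology. -/
def taut : PropForm α := PropForm.impl PropForm.fls PropForm.fls

lemma taut_mem_Cn (S : Set (PropForm α)) : (taut : PropForm α) ∈ Cn S :=
  fun _ _ h => h

lemma fls_Cn_univ {S : Set (PropForm α)} (h : PropForm.fls ∈ Cn S) : Cn S = Set.univ := by
  ext φ
  simp only [Set.mem_univ, iff_true]
  intro v hv
  exact absurd (h v hv) (fun x => x)

lemma negtaut_mem_iff {S : Set (PropForm α)} :
    (taut : PropForm α).neg ∈ Cn S ↔ PropForm.fls ∈ Cn S := by
  constructor
  · intro h v hv
    exact (h v hv) (fun x => x)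
  · intro h v hv _
    exact h v hv

lemma CnRules_least {B : Set (PropForm α × PropForm α)} {W S : Set (PropForm α)}
    (h1 : W ⊆ S) (h2 : Cn S ⊆ S) (h3 : ∀ r ∈ B, r.1 ∈ S → r.2 ∈ S) :
    CnRules B W ⊆ S :=
  Set.sInter_subset_of_mem ⟨h1, h2, h3⟩

lemma W_subset_CnRules (B : Set (PropForm α × PropForm α)) (W : Set (PropForm α)) :
    W ⊆ CnRules B W :=
  fun φ hφ => Set.mem_sInter.2 fun _ hS => hS.1 hφ

lemma Cn_CnRules (B : Set (PropForm α × PropForm α)) (W : Set (PropForm α)) :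
    Cn (CnRules B W) ⊆ CnRules B W := by
  intro φ hφ
  refine Set.mem_sInter.2 fun S hS => hS.2.1 ?_
  exact Cn_mono (Set.sInter_subset_of_mem hS) hφ

lemma CnRules_closed (B : Set (PropForm α × PropForm α)) (W : Set (PropForm α)) :
    ∀ r ∈ B, r.1 ∈ CnRules B W → r.2 ∈ CnRules B W := by
  intro r hr h1
  exact Set.mem_sInter.2 fun S hS => hS.2.2 r hr (Set.mem_sInter.1 h1 S hS)

lemma CnRules_mono {B B' : Set (PropForm α × PropForm α)} (W : Set (PropForm α))
    (hBB : B ⊆ B') : CnRules B W ⊆ CnRules B' W :=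
  Set.sInter_subset_sInter (fun _ hS => ⟨hS.1, hS.2.1, fun r hr => hS.2.2 r (hBB hr)⟩)

lemma Reduct_union (D E : Set (Default α)) (S : Set (PropForm α)) :
    Reduct (D ∪ E) S = Reduct D S ∪ Reduct E S := by
  ext r
  constructor
  · rintro ⟨d, hd | hd, ha, rfl⟩
    · exact Or.inl ⟨d, hd, ha, rfl⟩
    · exact Or.inr ⟨d, hd, ha, rfl⟩
  · rintro (⟨d, hd, ha, rfl⟩ | ⟨d, hd, ha, rfl⟩)
    · exact ⟨d, Or.inl hd, ha, rfl⟩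
    · exact ⟨d, Or.inr hd, ha, rfl⟩

/-- A member of `ext D W` is closed under `Cn`. -/
lemma ext_Cn_closed {D : Set (Default α)} {W S : Set (PropForm α)}
    (h : S ∈ ext D W) : Cn S ⊆ S := by
  rw [show S = CnRules (Reduct D S) W from h]
  exact Cn_CnRules _ _

/-- A `Cn`-closed set containing `fls` is everything. -/
lemma eq_univ_of_fls {S : Set (PropForm α)} (hcl : Cn S ⊆ S)
    (h : PropForm.fls ∈ S) : S = Set.univ :=
  Set.eq_univ_of_univ_subset (by
    rw [← fls_Cn_univ (subset_Cn S h)]; exact hcl)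

end Aux

/-- if a representable family has a strong system of distinct
representatives, then each of its subfamilies is representable. -/
theorem subfamily_representable_of_SSDR {α : Type} [Denumerable α]
    (𝓕 : Set (Set (PropForm α)))
    (hrep : ∃ (D : Set (Default α)) (W : Set (PropForm α)), ext D W = 𝓕)
    (hssdr : ∀ F ∈ 𝓕, ∃ φ ∈ F, ∀ F' ∈ 𝓕, F' ≠ F → φ ∉ F')
    (𝓖 : Set (Set (PropForm α))) (h𝓖 : 𝓖 ⊆ 𝓕) :
    ∃ (D : Set (Default α)) (W : Set (PropForm α)), ext D W = 𝓖 := by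
  classical
  -- Case 1: the empty family is representable by a theory with no extensions.
  by_cases hGempty : 𝓖 = ∅
  · subst hGempty
    set a₀ : α := Denumerable.ofNat α 0
    set d₀ : Default α := ⟨taut, {PropForm.atom a₀}, (PropForm.atom a₀).neg⟩
    refine ⟨{d₀}, ∅, ?_⟩
    ext S
    simp only [Set.mem_empty_iff_false, iff_false]
    intro hS
    have hS' : S = CnRules (Reduct {d₀} S) ∅ := hS
    by_cases happ : d₀.Applicable S
    · -- the rule fires, producing ¬a₀ ∈ S, contradicting applicability
      have hrule : (taut, (PropForm.atom a₀).neg) ∈ Reduct {d₀} S :=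
        ⟨d₀, rfl, happ, rfl⟩
      have htaut : (taut : PropForm α) ∈ CnRules (Reduct {d₀} S) ∅ :=
        Cn_CnRules _ _ (by
          exact Cn_mono (Set.empty_subset _) (taut_mem_Cn ∅))
      have hneg : (PropForm.atom a₀).neg ∈ S := by
        rw [hS']
        exact CnRules_closed _ _ _ hrule htaut
      have := happ (PropForm.atom a₀) (Finset.mem_singleton_self _)
      exact this (subset_Cn S hneg)
    · -- no rule applicable: S = Cn ∅, but then ¬a₀ ∉ Cn S
      have hneg : (PropForm.atom a₀).neg ∈ Cn S := by
        by_contra hc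
        exact happ (fun γ hγ => by
          rw [Finset.mem_singleton] at hγ; subst hγ; exact hc)
      have hSsub : S ⊆ Cn (∅ : Set (PropForm α)) := by
        rw [hS']
        exact CnRules_least (Set.empty_subset _) (Cn_idem _) (by
          rintro r ⟨d, hd, ha, rfl⟩
          rw [Set.mem_singleton_iff] at hd
          exact absurd (hd ▸ ha) happ)
      have : (PropForm.atom a₀).neg ∈ Cn (∅ : Set (PropForm α)) :=
        Cn_idem _ (Cn_mono hSsub hneg)
      have := this (fun _ => True) (fun ψ hψ => absurd hψ (Set.notMem_empty ψ))
      exact this trivial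
  -- Case 2: 𝓕 ⊆ 𝓖, so 𝓖 = 𝓕 and the original theory works.
  obtain ⟨D, W, hDW⟩ := hrep
  by_cases hFG : 𝓕 ⊆ 𝓖
  · exact ⟨D, W, hDW.trans (Set.Subset.antisymm hFG h𝓖)⟩
  -- Case 3: both 𝓖 and 𝓕 \ 𝓖 are nonempty.
  obtain ⟨G₀, hG₀⟩ := Set.nonempty_iff_ne_empty.2 hGempty
  obtain ⟨F₁, hF₁F, hF₁G⟩ := Set.not_subset.1 hFG
  -- choose the representatives
  have hssdr' : ∀ F : Set (PropForm α), ∃ φ : PropForm α,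
      F ∈ 𝓕 → (φ ∈ F ∧ ∀ F' ∈ 𝓕, F' ≠ F → φ ∉ F') := by
    intro F
    by_cases hF : F ∈ 𝓕
    · obtain ⟨φ, h1, h2⟩ := hssdr F hF
      exact ⟨φ, fun _ => ⟨h1, h2⟩⟩
    · exact ⟨PropForm.fls, fun h => absurd h hF⟩
  choose rep hrep' using hssdr'
  -- no member of 𝓕 is the inconsistent theory
  have huniv : ∀ S ∈ 𝓕, S ≠ Set.univ := by
    intro S hSF hSuniv
    rcases eq_or_ne G₀ S with rfl | hne
    · obtain ⟨h1, h2⟩ := hrep' F₁ hF₁F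
      have hne' : F₁ ≠ G₀ := fun h => hF₁G (h ▸ hG₀)
      exact h2 G₀ (h𝓖 hG₀) (Ne.symm hne') (hSuniv ▸ Set.mem_univ _)
    · obtain ⟨h1, h2⟩ := hrep' G₀ (h𝓖 hG₀)
      exact h2 S hSF (Ne.symm hne) (hSuniv ▸ Set.mem_univ _)
  -- the blocking defaults
  set E : Set (Default α) :=
    {d | ∃ F ∈ 𝓕, F ∉ 𝓖 ∧ d = ⟨rep F, {taut}, PropForm.fls⟩} with hE
  refine ⟨D ∪ E, W, ?_⟩
  -- applicability of blocking defaults: exactly over consistent S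
  have happE : ∀ (S : Set (PropForm α)) (F : Set (PropForm α)),
      PropForm.fls ∉ Cn S →
      (Default.Applicable S ⟨rep F, {taut}, PropForm.fls⟩) := by
    intro S F hcons γ hγ
    rw [Finset.mem_singleton] at hγ
    subst hγ
    exact fun h => hcons (negtaut_mem_iff.1 h)
  ext S
  constructor
  · -- extensions of the new theory belong to 𝓖
    intro hS
    have hS' : S = CnRules (Reduct (D ∪ E) S) W := hS
    have hScl : Cn S ⊆ S := ext_Cn_closed hS
    -- S must be consistent
    have hcons : PropForm.fls ∉ Cn S := by
      intro hf
      -- then no default with nonempty justifications can be applicable,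
      -- in particular Reduct E S = ∅
      have hEempty : Reduct E S = ∅ := by
        ext r
        simp only [Set.mem_empty_iff_false, iff_false]
        rintro ⟨d, ⟨F, hF, hFG', rfl⟩, ha, rfl⟩
        exact ha taut (Finset.mem_singleton_self _) (negtaut_mem_iff.2 hf)
      have hred : Reduct (D ∪ E) S = Reduct D S := by
        rw [Reduct_union, hEempty, Set.union_empty]
      have : S = CnRules (Reduct D S) W := by rw [← hred]; exact hS'
      have hSF : S ∈ 𝓕 := by rw [← hDW]; exact this
      exact huniv S hSF (eq_univ_of_fls hScl (hScl hf))
    -- the representatives of rejected members of 𝓕 are not in S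
    have hrepnot : ∀ F ∈ 𝓕, F ∉ 𝓖 → rep F ∉ S := by
      intro F hF hFG' hmem
      have hrule : (rep F, PropForm.fls) ∈ Reduct (D ∪ E) S :=
        ⟨⟨rep F, {taut}, PropForm.fls⟩, Or.inr ⟨F, hF, hFG', rfl⟩, happE S F hcons, rfl⟩
      have hmem' : rep F ∈ CnRules (Reduct (D ∪ E) S) W := by rw [← hS']; exact hmem
      have : PropForm.fls ∈ S := by
        rw [hS']
        exact CnRules_closed _ _ _ hrule hmem'
      exact hcons (subset_Cn S this)
    -- S is an extension of the original theory
    have hWS : W ⊆ S := by rw [hS']; exact W_subset_CnRules _ _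
    have hclD : ∀ r ∈ Reduct D S, r.1 ∈ S → r.2 ∈ S := by
      intro r hr h1
      have hr' : r ∈ Reduct (D ∪ E) S := by rw [Reduct_union]; exact Or.inl hr
      have h1' : r.1 ∈ CnRules (Reduct (D ∪ E) S) W := by rw [← hS']; exact h1
      have := CnRules_closed _ W r hr' h1'
      rw [hS']; exact this
    have hS₀subS : CnRules (Reduct D S) W ⊆ S :=
      CnRules_least hWS hScl hclD
    have hSext : S = CnRules (Reduct D S) W := by
      refine Set.Subset.antisymm ?_ hS₀subS
      have h2 : CnRules (Reduct (D ∪ E) S) W ⊆ CnRules (Reduct D S) W := by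
        refine CnRules_least (W_subset_CnRules _ _) (Cn_CnRules _ _) ?_
        rw [Reduct_union]
        rintro r (hr | ⟨d, ⟨F, hF, hFG', rfl⟩, ha, rfl⟩) h1
        · exact CnRules_closed _ _ _ hr h1
        · exact absurd (hS₀subS h1) (hrepnot F hF hFG')
      intro x hx
      exact h2 (by rw [← hS']; exact hx)
    have hSF : S ∈ 𝓕 := by rw [← hDW]; exact hSext
    by_contra hSG
    exact hrepnot S hSF hSG ((hrep' S hSF).1)
  · -- members of 𝓖 are extensions of the new theory
    intro hSG
    have hSF : S ∈ 𝓕 := h𝓖 hSG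
    have hSext : S = CnRules (Reduct D S) W := by rw [← hDW] at hSF; exact hSF
    have hScl : Cn S ⊆ S := by rw [hSext]; exact Cn_CnRules _ _
    -- S is consistent
    have hcons : PropForm.fls ∉ Cn S := by
      intro hf
      exact huniv S hSF (eq_univ_of_fls hScl (hScl hf))
    show S = CnRules (Reduct (D ∪ E) S) W
    refine Set.Subset.antisymm ?_ ?_
    · rw [Reduct_union]
      calc S = CnRules (Reduct D S) W := hSext
        _ ⊆ _ := CnRules_mono W (Set.subset_union_left)
    · refine CnRules_least (by rw [hSext]; exact W_subset_CnRules _ _) hScl ?_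
      rw [Reduct_union]
      rintro r (hr | ⟨d, ⟨F, hF, hFG', rfl⟩, ha, rfl⟩) h1
      · have h1' : r.1 ∈ CnRules (Reduct D S) W := by rw [← hSext]; exact h1
        have := CnRules_closed _ W r hr h1'
        rw [hSext]; exact this
      · -- rep F ∈ S is impossible since F ≠ S
        have hne : F ≠ S := fun h => hFG' (h ▸ hSG)
        exact absurd h1 ((hrep' F hF).2 S hSF (Ne.symm hne))
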